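/- arXiv:2301.06725 — 3 statements merged into one kernel-verified Lean document; each statement's English description precedes it below -/
import Mathlib

section
/- Let N : ℕ, f ∈ ℂ, g : Fin N → ℂ, η : ℝ with 0 ≤ η, and let A be a finite subset of Fin N. Define ω⋆ : Fin N → ℂ by ω⋆ i = η * exp(-I * (arg (g i) - arg f)) for i ∈ A and ω⋆ i = exp(-I * (arg (g i) - arg f)) for i ∉ A (where arg denotes the complex argument). Then ‖f + ∑_{i : Fin N} ω⋆ i * g i‖ = ‖f‖ + η * ∑_{i ∈ A} ‖g i‖ + ∑_{i ∉ A} ‖g i‖. -/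
/-!
Every reflected term `ωstar i * g i` is a nonnegative real multiple of the unit phase
`exp (arg f * I)` of the direct path, as is `f` itself. All summands therefore point in the
same direction, so the triangle inequality is an equality and the norm of the sum is the sum
of the norms.
-/

open Complex

lemma exp_neg_I_mul_arg_sub_arg_mul_self (z w : ℂ) :
    exp (-I * ((arg z : ℂ) - (arg w : ℂ))) * z = (‖z‖ : ℂ) * exp ((arg w : ℂ) * I) := by
  nth_rw 2 [← norm_mul_exp_arg_mul_I z]
  rw [mul_left_comm, ← exp_add]
  ring_nf

lemma norm_ofReal_mul_exp_mul_I {r : ℝ} (hr : 0 ≤ r) (θ : ℝ) :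
    ‖(r : ℂ) * exp (θ * I)‖ = r := by
  rw [norm_mul, norm_exp_ofReal_mul_I, mul_one, norm_real, Real.norm_of_nonneg hr]

/-- The phase-aligned, maximally amplified coefficients achieve the
triangle-inequality upper bound with equality. -/
theorem phase_aligned_coefficients_achieve_bound (N : ℕ) (f : ℂ) (g : Fin N → ℂ)
    (η : ℝ) (hη : 0 ≤ η) (A : Finset (Fin N))
    (ωstar : Fin N → ℂ)
    (hωA : ∀ i ∈ A, ωstar i = (η : ℂ) * Complex.exp (-I * ((Complex.arg (g i) : ℂ) - (Complex.arg f : ℂ))))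
    (hωAc : ∀ i ∉ A, ωstar i = Complex.exp (-I * ((Complex.arg (g i) : ℂ) - (Complex.arg f : ℂ)))) :
    ‖f + ∑ i : Fin N, ωstar i * g i‖ =
      ‖f‖ + η * ∑ i ∈ A, ‖g i‖ + ∑ i ∈ Aᶜ, ‖g i‖ := by
  set u := exp ((arg f : ℂ) * I)
  have hA : ∑ i ∈ A, ωstar i * g i = ∑ i ∈ A, (η : ℂ) * (‖g i‖ : ℂ) * u :=
    Finset.sum_congr rfl fun i hi => by
      rw [hωA i hi, mul_assoc, exp_neg_I_mul_arg_sub_arg_mul_self, mul_assoc]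
  have hAc : ∑ i ∈ Aᶜ, ωstar i * g i = ∑ i ∈ Aᶜ, (‖g i‖ : ℂ) * u :=
    Finset.sum_congr rfl fun i hi => by
      rw [hωAc i (Finset.mem_compl.mp hi), exp_neg_I_mul_arg_sub_arg_mul_self]
  have hsum : f + ∑ i : Fin N, ωstar i * g i =
      ((‖f‖ + η * ∑ i ∈ A, ‖g i‖ + ∑ i ∈ Aᶜ, ‖g i‖ : ℝ) : ℂ) * u := by
    rw [← Finset.sum_add_sum_compl A, hA, hAc, ← Finset.sum_mul, ← Finset.sum_mul,
      ← Finset.mul_sum]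
    conv_lhs => rw [← norm_mul_exp_arg_mul_I f]
    push_cast
    ring
  rw [hsum, norm_ofReal_mul_exp_mul_I (by positivity)]
end

section
/- (Theorem 1, combined) Let N L : ℕ with L ≤ N, f ∈ ℂ, g : Fin N → ℂ, and η : ℝ with 1 ≤ η. Let σ be a permutation of Fin N with i ↦ ‖g (σ i)‖ antitone and set A⋆ = σ '' {i : Fin N | (i : ℕ) < L}. Then for every finite subset A of Fin N with A.card = L and every ω : Fin N → ℂ with ‖ω i‖ ≤ η for i ∈ A and ‖ω i‖ = 1 for i ∉ A, one has ‖f + ∑_{i : Fin N} ω i * g i‖ ≤ ‖f‖ + η * ∑_{i ∈ A⋆} ‖g i‖ + ∑_{i ∉ A⋆} ‖g i‖, and this upper bound is attained by the placement A⋆ together with the coefficients ω⋆ i = η * exp(-I * (arg (g i) - arg f)) for i ∈ A⋆ and ω⋆ i = exp(-I * (arg (g i) - arg f)) for i ∉ A⋆. -/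
open Complex

/-!
By the triangle inequality, `‖f + ∑ ωᵢ gᵢ‖ ≤ ‖f‖ + η ∑_{A} ‖gᵢ‖ + ∑_{Aᶜ} ‖gᵢ‖
= ‖f‖ + (η - 1) ∑_{A} ‖gᵢ‖ + ∑ ‖gᵢ‖`, and since `η ≥ 1` this grows with `∑_{A} ‖gᵢ‖`,
which among placements of size `L` is largest on the `L` largest `‖gᵢ‖` (an exchange
argument). The coefficients `ω⋆` rotate every term `ω⋆ᵢ gᵢ` onto the direction of `f`,
so the triangle inequality becomes an equality.
-/

open Finset

section TopSum

variable {ι M : Type*} [LinearOrder ι] [AddCommMonoid M] [LinearOrder M]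
  [IsOrderedCancelAddMonoid M] {h : ι → M}

/-- Exchange argument: every index of `S \ T` lies above every index of `T \ S`. -/
theorem Antitone.sum_le_sum_of_isLowerSet (hh : Antitone h) {S T : Finset ι}
    (hT : IsLowerSet (T : Set ι)) (hST : #S = #T) : ∑ i ∈ S, h i ≤ ∑ i ∈ T, h i := by
  classical
  rw [← sum_sdiff_le_sum_sdiff]
  have hcard : #(S \ T) = #(T \ S) := card_sdiff_comm hST
  rcases (T \ S).eq_empty_or_nonempty with hTS | hTS
  · rw [hTS, card_empty, card_eq_zero] at hcard
    rw [hcard, hTS]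
  have below : ∀ x ∈ S \ T, h x ≤ (T \ S).inf' hTS h := by
    intro x hx
    rw [mem_sdiff] at hx
    refine (le_inf'_iff _ _).mpr fun y hy => hh (le_of_lt ?_)
    rw [mem_sdiff] at hy
    exact not_le.mp fun hxy => hx.2 (hT hxy hy.1)
  calc ∑ i ∈ S \ T, h i ≤ #(S \ T) • (T \ S).inf' hTS h := sum_le_card_nsmul _ _ _ below
    _ = #(T \ S) • (T \ S).inf' hTS h := by rw [hcard]
    _ ≤ ∑ i ∈ T \ S, h i := card_nsmul_le_sum _ _ _ fun y hy => inf'_le _ hy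

theorem Fin.isLowerSet_filter_val_lt (N L : ℕ) :
    IsLowerSet (({i : Fin N | (i : ℕ) < L} : Finset (Fin N)) : Set (Fin N)) := fun _ _ hba ha => by
  simp only [coe_filter, mem_univ, true_and, Set.mem_ofPred_eq] at ha ⊢
  exact (Fin.le_def.mp hba).trans_lt ha

theorem sum_le_sum_image_perm_of_antitone {N L : ℕ} {h : Fin N → M} (σ : Equiv.Perm (Fin N))
    (hσ : Antitone (h ∘ σ)) {A : Finset (Fin N)} (hA : #A = L) :
    ∑ i ∈ A, h i ≤ ∑ i ∈ image σ {i : Fin N | (i : ℕ) < L}, h i := by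
  have hLN : L ≤ N := hA ▸ (card_le_univ A).trans_eq (Fintype.card_fin N)
  rw [sum_image fun x _ y _ hxy => σ.injective hxy]
  calc ∑ i ∈ A, h i = ∑ i ∈ A.map σ.symm.toEmbedding, h (σ i) := by simp [sum_map]
    _ ≤ ∑ i ∈ univ.filter fun i : Fin N => (i : ℕ) < L, h (σ i) :=
      hσ.sum_le_sum_of_isLowerSet (Fin.isLowerSet_filter_val_lt N L)
        (by rw [card_map, hA, Fin.card_filter_val_lt, min_eq_right hLN])

end TopSum

theorem norm_add_sum_mul_le {ι R : Type*} [Fintype ι] [DecidableEq ι] [SeminormedRing R] (x : R)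
    {ω g : ι → R} {η : ℝ} {A : Finset ι} (hA : ∀ i ∈ A, ‖ω i‖ ≤ η) (hAc : ∀ i ∉ A, ‖ω i‖ ≤ 1) :
    ‖x + ∑ i, ω i * g i‖ ≤ ‖x‖ + η * ∑ i ∈ A, ‖g i‖ + ∑ i ∈ Aᶜ, ‖g i‖ := by
  have hterms : ∑ i, ‖ω i * g i‖ ≤ η * ∑ i ∈ A, ‖g i‖ + ∑ i ∈ Aᶜ, ‖g i‖ := by
    rw [← sum_add_sum_compl A, mul_sum]
    gcongr with i hi i hi
    · exact (norm_mul_le _ _).trans (mul_le_mul_of_nonneg_right (hA i hi) (norm_nonneg _))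
    · exact (norm_mul_le _ _).trans
        (mul_le_of_le_one_left (norm_nonneg _) (hAc i (mem_compl.mp hi)))
  calc ‖x + ∑ i, ω i * g i‖ ≤ ‖x‖ + ∑ i, ‖ω i * g i‖ :=
        (norm_add_le _ _).trans (add_le_add_right (norm_sum_le _ _) _)
    _ ≤ ‖x‖ + η * ∑ i ∈ A, ‖g i‖ + ∑ i ∈ Aᶜ, ‖g i‖ := by linarith

theorem mul_sum_add_sum_compl_le {ι : Type*} [Fintype ι] [DecidableEq ι] {w : ι → ℝ} {η : ℝ}
    (hη : 1 ≤ η) {S T : Finset ι} (hST : ∑ i ∈ S, w i ≤ ∑ i ∈ T, w i) :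
    η * ∑ i ∈ S, w i + ∑ i ∈ Sᶜ, w i ≤ η * ∑ i ∈ T, w i + ∑ i ∈ Tᶜ, w i := by
  have hS := sum_add_sum_compl S w
  have hT := sum_add_sum_compl T w
  nlinarith

theorem exp_neg_arg_sub_mul_self (z : ℂ) (θ : ℝ) :
    exp (-I * (arg z - θ)) * z = ‖z‖ * exp (θ * I) := by
  calc exp (-I * (arg z - θ)) * z = exp (-I * (arg z - θ)) * (‖z‖ * exp (arg z * I)) := by
        rw [norm_mul_exp_arg_mul_I]
    _ = ‖z‖ * exp (θ * I) := by
        rw [mul_left_comm, ← exp_add]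
        congr 2
        ring

theorem sum_mul_eq_of_phase_aligned {ι : Type*} [Fintype ι] [DecidableEq ι] {g ω : ι → ℂ}
    {A : Finset ι} {η θ : ℝ} (hA : ∀ i ∈ A, ω i = η * exp (-I * (arg (g i) - θ)))
    (hAc : ∀ i ∉ A, ω i = exp (-I * (arg (g i) - θ))) :
    ∑ i, ω i * g i = ((η * ∑ i ∈ A, ‖g i‖ + ∑ i ∈ Aᶜ, ‖g i‖ : ℝ) : ℂ) * exp (θ * I) := by
  rw [← sum_add_sum_compl A]
  have hon : ∀ i ∈ A, ω i * g i = η * ‖g i‖ * exp (θ * I) := fun i hi => by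
    rw [hA i hi, mul_assoc, exp_neg_arg_sub_mul_self, mul_assoc]
  have hoff : ∀ i ∈ Aᶜ, ω i * g i = ‖g i‖ * exp (θ * I) := fun i hi => by
    rw [hAc i (mem_compl.mp hi), exp_neg_arg_sub_mul_self]
  rw [sum_congr rfl hon, sum_congr rfl hoff, ← sum_mul, ← sum_mul, ← mul_sum]
  push_cast
  ring

theorem norm_add_ofReal_mul_exp_arg_mul_I (z : ℂ) {r : ℝ} (hr : 0 ≤ r) :
    ‖z + r * exp (arg z * I)‖ = ‖z‖ + r := by
  nth_rewrite 1 [← norm_mul_exp_arg_mul_I z]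
  rw [← add_mul, norm_mul, norm_exp_ofReal_mul_I, mul_one, ← ofReal_add, norm_real,
    Real.norm_of_nonneg (by positivity)]

theorem hris_optimal_placement_and_coefficients_general (N L : ℕ)
    (f : ℂ) (g : Fin N → ℂ) (η : ℝ) (hη : 1 ≤ η)
    (σ : Equiv.Perm (Fin N)) (hσ : Antitone (fun i => ‖g (σ i)‖))
    (Astar : Finset (Fin N))
    (hAstar : Astar = Finset.image σ (Finset.univ.filter (fun i : Fin N => (i : ℕ) < L)))
    (ωstar : Fin N → ℂ)
    (hωstarA : ∀ i ∈ Astar,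
      ωstar i = (η : ℂ) * Complex.exp (-I * ((Complex.arg (g i) : ℂ) - (Complex.arg f : ℂ))))
    (hωstarAc : ∀ i ∉ Astar,
      ωstar i = Complex.exp (-I * ((Complex.arg (g i) : ℂ) - (Complex.arg f : ℂ)))) :
    (∀ (A : Finset (Fin N)), A.card = L → ∀ (ω : Fin N → ℂ),
      (∀ i ∈ A, ‖ω i‖ ≤ η) → (∀ i ∉ A, ‖ω i‖ = 1) →
      ‖f + ∑ i : Fin N, ω i * g i‖ ≤
        ‖f‖ + η * ∑ i ∈ Astar, ‖g i‖ + ∑ i ∈ Astarᶜ, ‖g i‖) ∧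
    ‖f + ∑ i : Fin N, ωstar i * g i‖ =
      ‖f‖ + η * ∑ i ∈ Astar, ‖g i‖ + ∑ i ∈ Astarᶜ, ‖g i‖ := by
  refine ⟨fun A hA ω hωA hωAc => ?_, ?_⟩
  · have hbest : ∑ i ∈ A, ‖g i‖ ≤ ∑ i ∈ Astar, ‖g i‖ :=
      hAstar ▸ sum_le_sum_image_perm_of_antitone (h := fun i => ‖g i‖) σ hσ hA
    have hplace := mul_sum_add_sum_compl_le hη hbest
    have hω := norm_add_sum_mul_le f (g := g) hωA fun i hi => (hωAc i hi).le
    linarith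
  · have hgain : 0 ≤ η * ∑ i ∈ Astar, ‖g i‖ + ∑ i ∈ Astarᶜ, ‖g i‖ := by
      have hη0 : 0 ≤ η := zero_le_one.trans hη
      positivity
    rw [sum_mul_eq_of_phase_aligned hωstarA hωstarAc, norm_add_ofReal_mul_exp_arg_mul_I f hgain,
      add_assoc]

/-- Theorem 1 (combined): for every placement `A` of `L` active elements and
every feasible coefficient vector `ω`, the combined channel magnitude is
bounded by the value attained at the optimal placement `A⋆` (indices of the
`L` largest `‖g i‖`), and this bound is attained by the phase-aligned,
maximally amplified coefficients `ω⋆` together with `A⋆`. -/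
theorem hris_optimal_placement_and_coefficients (N L : ℕ) (hLN : L ≤ N)
    (f : ℂ) (g : Fin N → ℂ) (η : ℝ) (hη : 1 ≤ η)
    (σ : Equiv.Perm (Fin N)) (hσ : Antitone (fun i => ‖g (σ i)‖))
    (Astar : Finset (Fin N))
    (hAstar : Astar = Finset.image σ (Finset.univ.filter (fun i : Fin N => (i : ℕ) < L)))
    (ωstar : Fin N → ℂ)
    (hωstarA : ∀ i ∈ Astar,
      ωstar i = (η : ℂ) * Complex.exp (-I * ((Complex.arg (g i) : ℂ) - (Complex.arg f : ℂ))))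
    (hωstarAc : ∀ i ∉ Astar,
      ωstar i = Complex.exp (-I * ((Complex.arg (g i) : ℂ) - (Complex.arg f : ℂ)))) :
    (∀ (A : Finset (Fin N)), A.card = L → ∀ (ω : Fin N → ℂ),
      (∀ i ∈ A, ‖ω i‖ ≤ η) → (∀ i ∉ A, ‖ω i‖ = 1) →
      ‖f + ∑ i : Fin N, ω i * g i‖ ≤
        ‖f‖ + η * ∑ i ∈ Astar, ‖g i‖ + ∑ i ∈ Astarᶜ, ‖g i‖) ∧
    ‖f + ∑ i : Fin N, ωstar i * g i‖ =
      ‖f‖ + η * ∑ i ∈ Astar, ‖g i‖ + ∑ i ∈ Astarᶜ, ‖g i‖ :=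
  hris_optimal_placement_and_coefficients_general N L f g η hη σ hσ Astar hAstar ωstar hωstarA
    hωstarAc
end

section
/- Let N L : ℕ with L ≤ N, f ∈ ℂ, g : Fin N → ℂ, η : ℝ with 1 ≤ η, σsq : ℝ with 0 < σsq, and r : ℝ with 0 ≤ r. Let σ be a permutation of Fin N with i ↦ ‖g (σ i)‖ antitone, A⋆ = σ '' {i : Fin N | (i : ℕ) < L}, and c_max = (‖f‖ + η * ∑_{i ∈ A⋆} ‖g i‖ + ∑_{i ∉ A⋆} ‖g i‖)². Then for every finite subset A of Fin N with A.card = L and every ω : Fin N → ℂ with ‖ω i‖ ≤ η on A and ‖ω i‖ = 1 off A, the SNR satisfies ‖f + ∑_i ω i * g i‖² / (r + σsq) ≤ c_max / σsq. In particular the optimal SNR γ_opt is upper bounded by γ_ub := c_max / σ². -/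
/-- Upper bound `γ_opt ≤ γ_ub = c_max/σ²`: the SNR of any feasible placement
and coefficient vector is at most the maximal signal power divided by the
receiver noise variance. -/
theorem snr_upper_bound (N L : ℕ) (hLN : L ≤ N) (f : ℂ) (g : Fin N → ℂ)
    (η : ℝ) (hη : 1 ≤ η) (σsq : ℝ) (hσsq : 0 < σsq) (r : ℝ) (hr : 0 ≤ r)
    (σ : Equiv.Perm (Fin N)) (hσ : Antitone (fun i => ‖g (σ i)‖))
    (Astar : Finset (Fin N))
    (hAstar : Astar = Finset.image σ (Finset.univ.filter (fun i : Fin N => (i : ℕ) < L)))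
    (cmax : ℝ)
    (hcmax : cmax = (‖f‖ + η * ∑ i ∈ Astar, ‖g i‖ + ∑ i ∈ Astarᶜ, ‖g i‖) ^ 2)
    (A : Finset (Fin N)) (hA : A.card = L)
    (ω : Fin N → ℂ) (hωA : ∀ i ∈ A, ‖ω i‖ ≤ η) (hωAc : ∀ i ∉ A, ‖ω i‖ = 1) :
    ‖f + ∑ i : Fin N, ω i * g i‖ ^ 2 / (r + σsq) ≤ cmax / σsq := by
  -- cardinality of Astar is L
  have hfcard : (Finset.univ.filter (fun i : Fin N => (i : ℕ) < L)).card = L := by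
    have : (Finset.univ.filter (fun i : Fin N => (i : ℕ) < L)) =
        Finset.map (Fin.castLEEmb hLN) Finset.univ := by
      ext j
      simp only [Finset.mem_filter, Finset.mem_univ, true_and, Finset.mem_map]
      constructor
      · intro hj
        refine ⟨⟨(j : ℕ), hj⟩, ?_⟩
        ext; simp
      · rintro ⟨k, -, rfl⟩
        simpa using k.isLt
    simp [this]
  have hAcard : Astar.card = L := by
    rw [hAstar, Finset.card_image_of_injective _ σ.injective, hfcard]
  -- values outside Astar are ≤ values inside Astar
  have key : ∀ j ∉ Astar, ∀ k ∈ Astar, ‖g j‖ ≤ ‖g k‖ := by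
    intro j hj k hk
    rw [hAstar, Finset.mem_image] at hj hk
    obtain ⟨k', hk', rfl⟩ := hk
    simp only [Finset.mem_filter, Finset.mem_univ, true_and] at hk'
    have hj' : ¬ ((σ.symm j : ℕ) < L) := by
      intro h
      exact hj ⟨σ.symm j, by simp [h], by simp⟩
    have : k' ≤ σ.symm j := by
      have := Fin.le_def (a := k') (b := σ.symm j)
      omega
    have := hσ this
    simpa using this
  -- sum over A ≤ sum over Astar
  have hsum : ∑ i ∈ A, ‖g i‖ ≤ ∑ i ∈ Astar, ‖g i‖ := by
    have hd : (A \ Astar).card = (Astar \ A).card :=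
      Finset.card_sdiff_comm (by rw [hA, hAcard])
    have hdiff : ∑ i ∈ A \ Astar, ‖g i‖ ≤ ∑ i ∈ Astar \ A, ‖g i‖ := by
      rcases (Astar \ A).eq_empty_or_nonempty with he | hne
      · have : (A \ Astar) = ∅ := Finset.card_eq_zero.mp (by rw [hd, he]; simp)
        simp [this, he]
      · set m := (Astar \ A).inf' hne (fun i => ‖g i‖) with hm
        have h1 : ∑ i ∈ A \ Astar, ‖g i‖ ≤ (A \ Astar).card • m := by
          apply Finset.sum_le_card_nsmul
          intro x hx
          obtain ⟨y, hy⟩ := Finset.exists_mem_eq_inf' hne (fun i => ‖g i‖)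
          rw [hm, hy.2]
          exact key x (Finset.mem_sdiff.mp hx).2 y (Finset.mem_sdiff.mp hy.1).1
        have h2 : (Astar \ A).card • m ≤ ∑ i ∈ Astar \ A, ‖g i‖ := by
          apply Finset.card_nsmul_le_sum
          intro x hx
          exact Finset.inf'_le _ hx
        calc ∑ i ∈ A \ Astar, ‖g i‖ ≤ (A \ Astar).card • m := h1
          _ = (Astar \ A).card • m := by rw [hd]
          _ ≤ ∑ i ∈ Astar \ A, ‖g i‖ := h2
    calc ∑ i ∈ A, ‖g i‖
        = ∑ i ∈ A \ Astar, ‖g i‖ + ∑ i ∈ A ∩ Astar, ‖g i‖ := by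
          rw [add_comm, Finset.sum_inter_add_sum_sdiff]
      _ ≤ ∑ i ∈ Astar \ A, ‖g i‖ + ∑ i ∈ Astar ∩ A, ‖g i‖ := by
          rw [Finset.inter_comm]; linarith
      _ = ∑ i ∈ Astar, ‖g i‖ := by
          rw [add_comm, Finset.sum_inter_add_sum_sdiff]
  -- the norm bound
  have hnorm : ‖f + ∑ i : Fin N, ω i * g i‖ ≤
      ‖f‖ + η * ∑ i ∈ Astar, ‖g i‖ + ∑ i ∈ Astarᶜ, ‖g i‖ := by
    have htri : ‖f + ∑ i : Fin N, ω i * g i‖ ≤ ‖f‖ + ∑ i : Fin N, ‖ω i‖ * ‖g i‖ := by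
      calc ‖f + ∑ i : Fin N, ω i * g i‖ ≤ ‖f‖ + ‖∑ i : Fin N, ω i * g i‖ := norm_add_le _ _
        _ ≤ ‖f‖ + ∑ i : Fin N, ‖ω i * g i‖ := by
            gcongr; exact norm_sum_le _ _
        _ = ‖f‖ + ∑ i : Fin N, ‖ω i‖ * ‖g i‖ := by simp [norm_mul]
    have hsplit : ∑ i : Fin N, ‖ω i‖ * ‖g i‖ =
        ∑ i ∈ A, ‖ω i‖ * ‖g i‖ + ∑ i ∈ Aᶜ, ‖ω i‖ * ‖g i‖ :=
      (Finset.sum_add_sum_compl A _).symm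
    have hbA : ∑ i ∈ A, ‖ω i‖ * ‖g i‖ ≤ η * ∑ i ∈ A, ‖g i‖ := by
      rw [Finset.mul_sum]
      apply Finset.sum_le_sum
      intro i hi
      exact mul_le_mul_of_nonneg_right (hωA i hi) (norm_nonneg _)
    have hbAc : ∑ i ∈ Aᶜ, ‖ω i‖ * ‖g i‖ = ∑ i ∈ Aᶜ, ‖g i‖ := by
      apply Finset.sum_congr rfl
      intro i hi
      rw [hωAc i (Finset.mem_compl.mp hi), one_mul]
    -- compare placements: total sums
    have htot : ∀ S : Finset (Fin N), η * ∑ i ∈ S, ‖g i‖ + ∑ i ∈ Sᶜ, ‖g i‖ =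
        (∑ i : Fin N, ‖g i‖) + (η - 1) * ∑ i ∈ S, ‖g i‖ := by
      intro S
      have := Finset.sum_add_sum_compl S (fun i => ‖g i‖)
      ring_nf
      linarith
    have hcmp : η * ∑ i ∈ A, ‖g i‖ + ∑ i ∈ Aᶜ, ‖g i‖ ≤
        η * ∑ i ∈ Astar, ‖g i‖ + ∑ i ∈ Astarᶜ, ‖g i‖ := by
      rw [htot A, htot Astar]
      have : (η - 1) * ∑ i ∈ A, ‖g i‖ ≤ (η - 1) * ∑ i ∈ Astar, ‖g i‖ :=
        mul_le_mul_of_nonneg_left hsum (by linarith)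
      linarith
    calc ‖f + ∑ i : Fin N, ω i * g i‖ ≤ ‖f‖ + ∑ i : Fin N, ‖ω i‖ * ‖g i‖ := htri
      _ = ‖f‖ + (∑ i ∈ A, ‖ω i‖ * ‖g i‖ + ∑ i ∈ Aᶜ, ‖ω i‖ * ‖g i‖) := by rw [hsplit]
      _ ≤ ‖f‖ + (η * ∑ i ∈ A, ‖g i‖ + ∑ i ∈ Aᶜ, ‖g i‖) := by rw [hbAc]; linarith
      _ ≤ ‖f‖ + η * ∑ i ∈ Astar, ‖g i‖ + ∑ i ∈ Astarᶜ, ‖g i‖ := by linarith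
  have hsq : ‖f + ∑ i : Fin N, ω i * g i‖ ^ 2 ≤ cmax := by
    rw [hcmax]
    exact pow_le_pow_left₀ (norm_nonneg _) hnorm 2
  have hcm : 0 ≤ cmax := by rw [hcmax]; positivity
  calc ‖f + ∑ i : Fin N, ω i * g i‖ ^ 2 / (r + σsq)
      ≤ cmax / (r + σsq) := by gcongr <;> linarith
    _ ≤ cmax / σsq := by gcongr <;> linarith
end
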